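/- arXiv:0902.1546 — 7 statements merged into one kernel-verified Lean document; each statement's English description precedes it below -/
import Mathlib

section
/- Let a, b ∈ ℤ and let q ∈ ℍ be a quaternion, written as q = z + w·j with z, w ∈ ℂ (using the decomposition ℍ = ℂ ⊕ ℂj). Then the identity λ^a · q = q · λ^b holds for every λ ∈ ℂ with |λ| = 1 (λ regarded as a quaternion) if and only if both of the following hold: (z = 0 or a = b) and (w = 0 or a = −b). -/
/-- The embedding of `ℂ` into the quaternions as the span of `1` and `i`. -/
def toQ (z : ℂ) : Quaternion ℝ := ⟨z.re, z.im, 0, 0⟩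

/-- The quaternion unit `j`. -/
def jq : Quaternion ℝ := ⟨0, 0, 1, 0⟩

lemma toQ_mul (x y : ℂ) : toQ (x * y) = toQ x * toQ y := by
  ext <;> simp only [Quaternion.re_mul, Quaternion.imI_mul, Quaternion.imJ_mul, Quaternion.imK_mul] <;> simp [toQ, Complex.mul_re, Complex.mul_im]

lemma jq_mul_toQ (x : ℂ) : jq * toQ x = toQ (starRingEnd ℂ x) * jq := by
  simp only [Quaternion.ext_iff, Quaternion.re_mul, Quaternion.imI_mul, Quaternion.imJ_mul, Quaternion.imK_mul]; simp [toQ, jq]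

lemma key (x y x' y' : ℂ) : toQ x + toQ y * jq = toQ x' + toQ y' * jq ↔ x = x' ∧ y = y' := by
  simp only [Quaternion.ext_iff, Quaternion.re_add, Quaternion.imI_add, Quaternion.imJ_add, Quaternion.imK_add, Quaternion.re_mul, Quaternion.imI_mul, Quaternion.imJ_mul, Quaternion.imK_mul]; simp [toQ, jq, Complex.ext_iff]; tauto

lemma step (u z w : ℂ) (v : ℂ) :
    toQ u * (toQ z + toQ w * jq) = (toQ z + toQ w * jq) * toQ v
    ↔ u * z = z * v ∧ u * w = w * starRingEnd ℂ v := by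
  have h1 : toQ u * (toQ z + toQ w * jq) = toQ (u * z) + toQ (u * w) * jq := by
    rw [mul_add, toQ_mul, toQ_mul, mul_assoc]
  have h2 : (toQ z + toQ w * jq) * toQ v
      = toQ (z * v) + toQ (w * starRingEnd ℂ v) * jq := by
    rw [add_mul, toQ_mul, toQ_mul, mul_assoc, jq_mul_toQ, ← mul_assoc]
  rw [h1, h2, key]

lemma conj_zpow_unit (l : ℂ) (hl : ‖l‖ = 1) (b : ℤ) :
    starRingEnd ℂ (l ^ b) = l ^ (-b) := by
  rw [zpow_neg, ← Complex.inv_eq_conj]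
  rw [norm_zpow, hl, one_zpow]

lemma pow_eq_forall (a b : ℤ) (h : ∀ l : ℂ, ‖l‖ = 1 → l ^ a = l ^ b) : a = b := by
  by_contra hne
  set n : ℤ := a - b with hn
  have hn0 : n ≠ 0 := sub_ne_zero.2 hne
  set l : ℂ := Complex.exp (Real.pi * Complex.I / n) with hl
  have habs : ‖l‖ = 1 := by
    rw [hl, Complex.norm_exp]
    simp [Complex.div_re, Complex.mul_I_re]
  have hne0 : l ≠ 0 := Complex.exp_ne_zero _
  have := h l habs
  have h1 : l ^ n = 1 := by
    rw [hn, zpow_sub₀ hne0, this, div_self (zpow_ne_zero _ hne0)]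
  have h2 : l ^ n = -1 := by
    rw [hl, ← Complex.exp_int_mul]
    rw [mul_div_cancel₀]
    · exact Complex.exp_pi_mul_I
    · exact_mod_cast hn0
  rw [h1] at h2; norm_num at h2

/-- For `q = z + w·j ∈ ℍ` (with `z, w ∈ ℂ`) and `a, b ∈ ℤ`, the identity
`λ^a · q = q · λ^b` holds for all unit complex numbers `λ` iff
(`z = 0` or `a = b`) and (`w = 0` or `a = -b`). -/
theorem stmt0 (a b : ℤ) (z w : ℂ) :
    (∀ l : ℂ, ‖l‖ = 1 →
      toQ (l ^ a) * (toQ z + toQ w * jq) = (toQ z + toQ w * jq) * toQ (l ^ b))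
    ↔ ((z = 0 ∨ a = b) ∧ (w = 0 ∨ a = -b)) := by
  simp only [step]
  constructor
  · intro h
    constructor
    · rcases eq_or_ne z 0 with hz | hz
      · exact Or.inl hz
      · refine Or.inr (pow_eq_forall a b fun l hl => ?_)
        have := (h l hl).1
        rw [mul_comm z] at this
        exact mul_right_cancel₀ hz this
    · rcases eq_or_ne w 0 with hw | hw
      · exact Or.inl hw
      · refine Or.inr (pow_eq_forall a (-b) fun l hl => ?_)
        have := (h l hl).2
        rw [conj_zpow_unit l hl, mul_comm w] at this
        exact mul_right_cancel₀ hw this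
  · rintro ⟨hz, hw⟩ l hl
    have hne0 : l ≠ 0 := by intro h0; rw [h0] at hl; simp at hl
    have hconj := conj_zpow_unit l hl b
    constructor
    · rcases hz with hz | hz
      · simp [hz]
      · rw [hz, mul_comm]
    · rcases hw with hw | hw
      · simp [hw]
      · rw [hconj, hw, mul_comm]
end

section
/- Let k ≥ 1, let d ∈ ℤ^k with d₁ ≠ 0, and let q ∈ ℍ^k with q₁ = 1. Suppose that for every λ ∈ ℂ with |λ| = 1 and every index i one has λ^{d₁} · q_i = q_i · λ^{d_i} (multiplication in ℍ, with λ regarded as a quaternion). Then there exists w ∈ ℝ^k such that ν(q_i) = w_i · (1, 0, 0) ∈ ℝ³ for every i; in particular, the vectors ν(q₁), …, ν(q_k) all lie on the single line ℝ·(1,0,0). -/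
noncomputable section

/-- The complex number `x` in the decomposition `q = x + y·j`. -/
def cxA (q : Quaternion ℝ) : ℂ := ⟨q.re, q.imI⟩

/-- The complex number `y` in the decomposition `q = x + y·j`. -/
def cxB (q : Quaternion ℝ) : ℂ := ⟨q.imJ, q.imK⟩

/-- `ν(x + y·j) = (|x|² − |y|², Re(2ixy), Im(2ixy)) ∈ ℝ³`. -/
def nu (q : Quaternion ℝ) : EuclideanSpace ℝ (Fin 3) :=
  (WithLp.equiv 2 (Fin 3 → ℝ)).symm
    ![Complex.normSq (cxA q) - Complex.normSq (cxB q),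
      (2 * Complex.I * cxA q * cxB q).re,
      (2 * Complex.I * cxA q * cxB q).im]

lemma key_s1 (u v : ℂ) (q : Quaternion ℝ) (h : toQ u * q = q * toQ v) :
    u * cxA q = cxA q * v ∧ u * cxB q = cxB q * (starRingEnd ℂ v) := by
  simp only [Quaternion.ext_iff, Quaternion.re_mul, Quaternion.imI_mul,
    Quaternion.imJ_mul, Quaternion.imK_mul] at h
  simp only [toQ, cxA, cxB] at h
  obtain ⟨h1, h2, h3, h4⟩ := h
  constructor <;> apply Complex.ext <;>
    simp [cxA, cxB, Complex.mul_re, Complex.mul_im] <;> linarith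

/-- If `q ∈ ℍ^k` with `q₁ = 1` satisfies `λ^{d₁}·q_i = q_i·λ^{d_i}` for all unit `λ` and
all `i`, where `d₁ ≠ 0`, then all `ν(q_i)` lie on the line `ℝ·(1,0,0)`. -/
theorem stmt1 (k : ℕ) (hk : 0 < k) (d : Fin k → ℤ) (hd : d ⟨0, hk⟩ ≠ 0)
    (q : Fin k → Quaternion ℝ) (hq : q ⟨0, hk⟩ = 1)
    (h : ∀ l : ℂ, ‖l‖ = 1 → ∀ i : Fin k,
      toQ (l ^ d ⟨0, hk⟩) * q i = q i * toQ (l ^ d i)) :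
    ∃ w : Fin k → ℝ, ∀ i : Fin k,
      nu (q i) = w i • (WithLp.equiv 2 (Fin 3 → ℝ)).symm ![1, 0, 0] := by
  have hd' : ((d ⟨0, hk⟩ : ℤ) : ℝ) ≠ 0 := Int.cast_ne_zero.mpr hd
  have hxy : ∀ i, cxA (q i) * cxB (q i) = 0 := by
    intro i
    by_contra hne
    have hx : cxA (q i) ≠ 0 := fun h0 => hne (by rw [h0, zero_mul])
    have hy : cxB (q i) ≠ 0 := fun h0 => hne (by rw [h0, mul_zero])
    set l : ℂ := Complex.exp (↑(Real.pi / (2 * ((d ⟨0, hk⟩ : ℤ) : ℝ))) * Complex.I) with hldef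
    have hl : ‖l‖ = 1 := by
      simp only [hldef, Complex.norm_exp, Complex.mul_I_re, Complex.ofReal_im, neg_zero,
        Real.exp_zero]
    obtain ⟨e1, e2⟩ := key_s1 _ _ _ (h l hl i)
    have huv : l ^ d ⟨0, hk⟩ = l ^ d i :=
      mul_right_cancel₀ hx (by rw [e1, mul_comm])
    have huv' : l ^ d ⟨0, hk⟩ = starRingEnd ℂ (l ^ d i) :=
      mul_right_cancel₀ hy (by rw [e2, mul_comm])
    have habs : ‖l ^ d i‖ = 1 := by rw [norm_zpow, hl, one_zpow]
    have hsq : (l ^ d ⟨0, hk⟩) * (l ^ d ⟨0, hk⟩) = 1 := by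
      nth_rewrite 2 [huv'] ; rw [huv, Complex.mul_conj, Complex.normSq_eq_norm_sq, habs]
      norm_num
    have hdc : ((d ⟨0, hk⟩ : ℤ) : ℂ) ≠ 0 := Int.cast_ne_zero.mpr hd
    have hu : l ^ d ⟨0, hk⟩ = Complex.exp (↑(Real.pi / 2) * Complex.I) := by
      rw [hldef, ← Complex.exp_int_mul]
      congr 1
      push_cast
      field_simp
    rw [hu, ← Complex.exp_add] at hsq
    have : (↑(Real.pi / 2) * Complex.I + ↑(Real.pi / 2) * Complex.I) = ↑Real.pi * Complex.I := by
      push_cast; ring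
    rw [this, Complex.exp_pi_mul_I] at hsq
    norm_num at hsq
  refine ⟨fun i => Complex.normSq (cxA (q i)) - Complex.normSq (cxB (q i)), fun i => ?_⟩
  have h2 : 2 * Complex.I * cxA (q i) * cxB (q i) = 0 := by
    rw [mul_assoc, hxy, mul_zero]
  ext j
  fin_cases j <;>
    simp [nu, h2, PiLp.smul_apply, PiLp.toLp_apply, smul_eq_mul]
end
end

section
/- Let k ≥ 2, let u₁, …, u_k ∈ ℝ², let 2 ≤ m ≤ k, and suppose u_{m−1} and u_m are linearly independent. Define v₁ = u₁ + u_k and v_i = u_i − u_{i−1} for 2 ≤ i ≤ k. Suppose d ∈ ℝ^k satisfies d_i = d₁ for all i < m and d_i = −d₁ for all i > m. Then Σ_{i=1}^k d_i·v_i = (d₁ − d_m)·u_{m−1} + (d₁ + d_m)·u_m; consequently, if Σ_{i=1}^k d_i·v_i = 0 then d = 0. -/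
private lemma tele (u : ℕ → ℝ × ℝ) (a : ℕ) : ∀ b, a ≤ b →
    ∑ i ∈ Finset.Ioc a b, (u i - u (i - 1)) = u b - u a := by
  intro b hb
  induction b, hb using Nat.le_induction with
  | base => simp
  | succ n hn ih =>
    rw [← Finset.Ioc_union_Ioc_eq_Ioc hn (Nat.le_succ n), Finset.sum_union (by
      simp [Finset.disjoint_left]
      omega)]
    have : Finset.Ioc n (n+1) = {n+1} := by ext x; simp
    rw [ih, this, Finset.sum_singleton]
    simp

/-- Given `u₁, …, u_k ∈ ℝ²` with `u_{m−1}, u_m` linearly independent, setting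
`v₁ = u₁ + u_k` and `v_i = u_i − u_{i−1}` for `2 ≤ i ≤ k`, and `d ∈ ℝ^k` with
`d_i = d₁` for `i < m` and `d_i = −d₁` for `i > m`, we get
`Σ d_i·v_i = (d₁ − d_m)·u_{m−1} + (d₁ + d_m)·u_m`; hence `Σ d_i·v_i = 0` forces `d = 0`. -/
theorem stmt2 (k : ℕ) (hk : 2 ≤ k) (u v : ℕ → ℝ × ℝ) (m : ℕ) (hm1 : 2 ≤ m) (hm2 : m ≤ k)
    (hindep : LinearIndependent ℝ ![u (m - 1), u m])
    (hv1 : v 1 = u 1 + u k)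
    (hv : ∀ i, 2 ≤ i → i ≤ k → v i = u i - u (i - 1))
    (d : ℕ → ℝ)
    (hdlt : ∀ i, 1 ≤ i → i < m → d i = d 1)
    (hdgt : ∀ i, m < i → i ≤ k → d i = -d 1) :
    (∑ i ∈ Finset.Icc 1 k, d i • v i) = (d 1 - d m) • u (m - 1) + (d 1 + d m) • u m ∧
      ((∑ i ∈ Finset.Icc 1 k, d i • v i) = 0 → ∀ i, 1 ≤ i → i ≤ k → d i = 0) := by
  have key : (∑ i ∈ Finset.Icc 1 k, d i • v i)
      = (d 1 - d m) • u (m - 1) + (d 1 + d m) • u m := by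
    have hIcc : Finset.Icc 1 k = insert 1 (Finset.Ioc 1 k) := by ext x; simp; omega
    rw [hIcc, Finset.sum_insert (by simp)]
    rw [← Finset.Ioc_union_Ioc_eq_Ioc (show 1 ≤ m - 1 by omega) (show m - 1 ≤ k by omega),
      Finset.sum_union (by simp [Finset.disjoint_left]; omega)]
    rw [← Finset.Ioc_union_Ioc_eq_Ioc (show m - 1 ≤ m by omega) hm2,
      Finset.sum_union (by simp [Finset.disjoint_left]; omega)]
    have hA : ∑ i ∈ Finset.Ioc 1 (m - 1), d i • v i = d 1 • (u (m - 1) - u 1) := by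
      rw [show ∑ i ∈ Finset.Ioc 1 (m - 1), d i • v i
          = ∑ i ∈ Finset.Ioc 1 (m - 1), d 1 • (u i - u (i - 1)) from
        Finset.sum_congr rfl (fun i hi => by
          simp only [Finset.mem_Ioc] at hi
          rw [hv i (by omega) (by omega), hdlt i (by omega) (by omega)]),
        ← Finset.smul_sum, tele u 1 (m - 1) (by omega)]
    have hB : ∑ i ∈ Finset.Ioc (m - 1) m, d i • v i = d m • (u m - u (m - 1)) := by
      have : Finset.Ioc (m - 1) m = {m} := by ext x; simp; omega
      rw [this, Finset.sum_singleton, hv m hm1 hm2]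
    have hC : ∑ i ∈ Finset.Ioc m k, d i • v i = (-d 1) • (u k - u m) := by
      rw [show ∑ i ∈ Finset.Ioc m k, d i • v i
          = ∑ i ∈ Finset.Ioc m k, (-d 1) • (u i - u (i - 1)) from
        Finset.sum_congr rfl (fun i hi => by
          simp only [Finset.mem_Ioc] at hi
          rw [hv i (by omega) (by omega), hdgt i (by omega) (by omega)]),
        ← Finset.smul_sum, tele u m k hm2]
    rw [hA, hB, hC, hv1]
    module
  refine ⟨key, fun hz i hi1 hik => ?_⟩
  rw [key] at hz
  obtain ⟨h1, h2⟩ := LinearIndependent.pair_iff.mp hindep _ _ hz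
  have hd1 : d 1 = 0 := by linarith
  have hdm : d m = 0 := by linarith
  rcases lt_trichotomy i m with h | h | h
  · rw [hdlt i hi1 h, hd1]
  · rw [h, hdm]
  · rw [hdgt i h hik, hd1, neg_zero]
end

section
/- Let k ≥ 2, let u₁, …, u_k ∈ ℤ² ⊂ ℝ², and define v₁ = u₁ + u_k and v_i = u_i − u_{i−1} for 2 ≤ i ≤ k. Let Ω : ℝ^k → ℝ² be the linear map with Ω(e_i) = v_i for the standard basis e₁, …, e_k, and let Λ₀ ⊂ ℝ^k be the additive subgroup generated by ½(e₁ + … + e_k), e₂, e₃, …, e_k. Then Ω(Λ₀) equals the additive subgroup of ℝ² generated by u₁, …, u_k. -/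
/-- Given `u₁, …, u_k ∈ ℤ² ⊂ ℝ²`, with `v₁ = u₁ + u_k`, `v_i = u_i − u_{i−1}`, and
`Ω : ℝ^k → ℝ²` linear with `Ω(e_i) = v_i`, the image under `Ω` of the lattice generated by
`½(e₁ + … + e_k), e₂, …, e_k` is the additive subgroup of `ℝ²` generated by `u₁, …, u_k`. -/
theorem stmt3 (k : ℕ) (hk : 2 ≤ k) (u : Fin k → ℤ × ℤ) (uR : Fin k → ℝ × ℝ)
    (huR : ∀ i, uR i = (((u i).1 : ℝ), ((u i).2 : ℝ)))
    (v : Fin k → ℝ × ℝ)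
    (hv0 : v ⟨0, by omega⟩ = uR ⟨0, by omega⟩ + uR ⟨k - 1, by omega⟩)
    (hvi : ∀ i : Fin k, 0 < i.val →
      v i = uR i - uR ⟨i.val - 1, Nat.lt_of_le_of_lt (Nat.sub_le _ _) i.isLt⟩)
    (Ω : (Fin k → ℝ) →ₗ[ℝ] ℝ × ℝ)
    (hΩ : ∀ i : Fin k, Ω (Pi.single i 1) = v i)
    (Λ₀ : AddSubgroup (Fin k → ℝ))
    (hΛ₀ : Λ₀ = AddSubgroup.closure
      (insert ((1 / 2 : ℝ) • ∑ i : Fin k, Pi.single i (1 : ℝ))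
        {x | ∃ i : Fin k, i.val ≠ 0 ∧ x = Pi.single i (1 : ℝ)})) :
    AddSubgroup.map Ω.toAddMonoidHom Λ₀ = AddSubgroup.closure (Set.range uR) := by
  obtain ⟨K, rfl⟩ : ∃ K, k = K + 1 := ⟨k - 1, by omega⟩
  have hK : 1 ≤ K := by omega
  have hKlt : K < K + 1 := by omega
  -- abbreviations
  set s : Fin (K + 1) → ℝ := (1 / 2 : ℝ) • ∑ i : Fin (K + 1), Pi.single i (1 : ℝ) with hs
  set S : Set (Fin (K + 1) → ℝ) :=
    insert s {x | ∃ i : Fin (K + 1), i.val ≠ 0 ∧ x = Pi.single i (1 : ℝ)} with hS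
  -- telescoping sum of v
  have hvlast : ∀ i : Fin (K + 1), (hi : 0 < i.val) →
      v i = uR i - uR ⟨i.val - 1, by omega⟩ := by
    intro i hi
    rw [hvi i hi]
  have G : ℕ → ℝ × ℝ := fun n => uR ⟨min n K, Nat.lt_succ_of_le (min_le_right n K)⟩
  have hsum : ∑ i : Fin (K + 1), v i = uR ⟨K, hKlt⟩ + uR ⟨K, hKlt⟩ := by
    set G : ℕ → ℝ × ℝ := fun n => uR ⟨min n K, Nat.lt_succ_of_le (min_le_right n K)⟩ with hG
    rw [Fin.sum_univ_succ]
    have h1 : ∀ i : Fin K, v i.succ = G (i.val + 1) - G i.val := by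
      intro i
      rw [hvlast i.succ (by simp)]
      congr 1
      · exact congrArg uR (Fin.ext
          (by simp [hG, Nat.min_eq_left (Nat.succ_le_of_lt i.isLt)]))
      · exact congrArg uR (Fin.ext (by simp [hG, Nat.min_eq_left i.isLt.le]))
    have htel : ∑ n ∈ Finset.range K, (G (n + 1) - G n) = G K - G 0 :=
      Finset.sum_range_sub G K
    have h2 : ∑ i : Fin K, v i.succ = G K - G 0 := by
      rw [Finset.sum_congr rfl fun i _ => h1 i,
        Fin.sum_univ_eq_sum_range (fun n => G (n + 1) - G n) K, htel]
    rw [h2]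
    have hGK : G K = uR ⟨K, hKlt⟩ := congrArg uR (Fin.ext (by simp [hG]))
    have hG0 : G 0 = uR ⟨0, by omega⟩ := congrArg uR (Fin.ext (by simp [hG]))
    have hv0' : v (0 : Fin (K + 1)) = uR ⟨0, by omega⟩ + uR ⟨K, hKlt⟩ := by
      rw [show (0 : Fin (K + 1)) = ⟨0, by omega⟩ from Fin.ext (by simp), hv0]
      simp
    rw [hGK, hG0, hv0']
    abel
  -- value of Ω at s
  have hΩs : Ω s = uR ⟨K, hKlt⟩ := by
    rw [hs, map_smul, map_sum]
    simp only [hΩ]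
    rw [hsum, smul_add]
    rw [← add_smul]
    norm_num
  -- rewrite the map as a closure
  rw [hΛ₀, AddMonoidHom.map_closure]
  apply le_antisymm
  · rw [AddSubgroup.closure_le]
    rintro y ⟨x, hx, rfl⟩
    rcases hx with rfl | ⟨i, hi0, rfl⟩
    · show Ω s ∈ _
      rw [hΩs]
      exact AddSubgroup.subset_closure ⟨_, rfl⟩
    · show Ω (Pi.single i 1) ∈ _
      rw [hΩ i, hvlast i (Nat.pos_of_ne_zero hi0)]
      exact AddSubgroup.sub_mem _ (AddSubgroup.subset_closure ⟨_, rfl⟩)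
        (AddSubgroup.subset_closure ⟨_, rfl⟩)
  · rw [AddSubgroup.closure_le]
    rintro y ⟨i, rfl⟩
    set C := AddSubgroup.closure (⇑Ω.toAddMonoidHom '' S) with hC
    have key : ∀ m : ℕ, uR ⟨K - m, by omega⟩ ∈ C := by
      intro m
      induction m with
      | zero =>
        have : uR ⟨K - 0, by omega⟩ = Ω s := by rw [hΩs]; congr 1
        rw [this]
        exact AddSubgroup.subset_closure ⟨s, Set.mem_insert _ _, rfl⟩
      | succ m ih =>
        by_cases h0 : K - m = 0
        · have : (⟨K - (m + 1), by omega⟩ : Fin (K + 1)) = ⟨K - m, by omega⟩ :=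
            Fin.ext (by simp; omega)
          rw [this]; exact ih
        · set j : Fin (K + 1) := ⟨K - m, by omega⟩ with hj
          have hjpos : 0 < j.val := Nat.pos_of_ne_zero h0
          have hΩj : Ω (Pi.single j 1) ∈ C :=
            AddSubgroup.subset_closure ⟨Pi.single j 1,
              Set.mem_insert_of_mem _ ⟨j, h0, rfl⟩, rfl⟩
          rw [hΩ j, hvlast j hjpos] at hΩj
          have := AddSubgroup.sub_mem C ih hΩj
          have heq : uR j - (uR j - uR ⟨j.val - 1, by omega⟩) = uR ⟨j.val - 1, by omega⟩ := by
            abel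
          rw [heq] at this
          have hidx : (⟨K - (m + 1), by omega⟩ : Fin (K + 1)) = ⟨j.val - 1, by omega⟩ :=
            Fin.ext (by simp [hj]; omega)
          rw [hidx]; exact this
    have := key (K - i.val)
    have hidx : (⟨K - (K - i.val), by omega⟩ : Fin (K + 1)) = i :=
      Fin.ext (by simp; omega)
    rwa [hidx] at this
end

section
/- Let k ≥ 1, let z₁, …, z_k ∈ ℂ with |z_j| = 1 for all j, and let z ∈ ℂ with z ≠ z_j and z ≠ −z_j for all j. Set λ_j = (z + z_j)/(z − z_j) ∈ ℂ*. Then for every j: λ_j·(1 − z̄_j z) = −(1 + z̄_j z) and λ_j^{−1}·(z_j + z) = −(z_j − z). Consequently, the element (λ₁, …, λ_k) of the complex torus (ℂ*)^k, acting on ℂP^{2k−1} by (x₁, y₁, …, x_k, y_k) ↦ (λ₁x₁, λ₁^{−1}y₁, …, λ_k x_k, λ_k^{−1} y_k), maps the point P(z) to the point P(−z). -/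
/-- For unit complex numbers `z₁, …, z_k`, the point `P(w) ∈ ℂP^{2k−1}` has homogeneous
coordinates `(1 − z̄₁w, z₁ + w, …, 1 − z̄_kw, z_k + w)`, here recorded as a vector in
`(ℂ × ℂ)^k`. -/
def Pvec (k : ℕ) (z : Fin k → ℂ) (w : ℂ) : Fin k → ℂ × ℂ :=
  fun m => (1 - (starRingEnd ℂ) (z m) * w, z m + w)

/-- With `λ_j = (z + z_j)/(z − z_j)` one has `λ_j(1 − z̄_jz) = −(1 + z̄_jz)` and
`λ_j⁻¹(z_j + z) = −(z_j − z)`; consequently the torus element `(λ₁, …, λ_k)` acting by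
`(x_j, y_j) ↦ (λ_jx_j, λ_j⁻¹y_j)` maps `P(z)` to `P(−z)` in `ℂP^{2k−1}` (i.e. it sends
the homogeneous coordinate vector of `P(z)` to a nonzero multiple of that of `P(−z)`). -/
theorem stmt6 (k : ℕ) (hk : 0 < k) (z : Fin k → ℂ) (hz : ∀ j, ‖z j‖ = 1)
    (w : ℂ) (hw : ∀ j, w ≠ z j) (hw' : ∀ j, w ≠ -z j)
    (l : Fin k → ℂ) (hl : ∀ j, l j = (w + z j) / (w - z j)) :
    (∀ j : Fin k,
        l j * (1 - (starRingEnd ℂ) (z j) * w) = -(1 + (starRingEnd ℂ) (z j) * w) ∧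
        (l j)⁻¹ * (z j + w) = -(z j - w)) ∧
      ∃ c : ℂ, c ≠ 0 ∧ ∀ j : Fin k,
        (l j * (Pvec k z w j).1, (l j)⁻¹ * (Pvec k z w j).2) = c • Pvec k z (-w) j := by
  have key : ∀ j : Fin k,
      l j * (1 - (starRingEnd ℂ) (z j) * w) = -(1 + (starRingEnd ℂ) (z j) * w) ∧
      (l j)⁻¹ * (z j + w) = -(z j - w) := by
    intro j
    have hsub : w - z j ≠ 0 := sub_ne_zero.mpr (hw j)
    have hadd : w + z j ≠ 0 := by
      intro h
      exact hw' j (by linear_combination h)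
    have hzj : z j ≠ 0 := by
      intro h
      have := hz j
      rw [h] at this
      simp at this
    have hconj : (starRingEnd ℂ) (z j) * z j = 1 := by
      rw [mul_comm, Complex.mul_conj]
      norm_cast
      rw [Complex.normSq_eq_norm_sq, hz j]
      norm_num
    have hc : (starRingEnd ℂ) (z j) = (z j)⁻¹ := eq_inv_of_mul_eq_one_left hconj
    constructor
    · rw [hl, hc]
      field_simp
      ring
    · rw [hl, inv_div]
      rw [add_comm (z j) w, div_mul_cancel₀ _ hadd]
      ring
  refine ⟨key, -1, by norm_num, fun j => ?_⟩
  have h1 := (key j).1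
  have h2 := (key j).2
  simp only [Pvec, neg_smul, one_smul, Prod.neg_mk, Prod.mk.injEq]
  exact ⟨by rw [h1]; ring, by rw [h2]; ring⟩
end

section
/- Let k ≥ 1 and w ∈ ℝ^k. Then the following are equivalent: (i) for every q ∈ ℍ^k with q₁ ≠ 0 one has Σ_{m=1}^k w_m · ν(q_m) ≠ 0 ∈ ℝ³; (ii) w₁ ≠ 0 and w₂ = w₃ = … = w_k = 0. -/
noncomputable section

lemma nu_apply (q : Quaternion ℝ) (i : Fin 3) :
    nu q i = ![Complex.normSq (cxA q) - Complex.normSq (cxB q),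
      (2 * Complex.I * cxA q * cxB q).re,
      (2 * Complex.I * cxA q * cxB q).im] i := rfl

lemma nu_zero : nu (0 : Quaternion ℝ) = 0 := by
  ext i
  fin_cases i <;> simp [nu_apply, cxA, cxB, Complex.ext_iff, Quaternion.re_zero, Quaternion.imI_zero, Quaternion.imJ_zero, Quaternion.imK_zero]

lemma nu_one : nu (1 : Quaternion ℝ) = (WithLp.equiv 2 (Fin 3 → ℝ)).symm ![1, 0, 0] := by
  ext i
  fin_cases i <;> simp [nu_apply, cxA, cxB, Complex.ext_iff, Complex.normSq, Quaternion.re_one, Quaternion.imI_one, Quaternion.imJ_one, Quaternion.imK_one]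

lemma nu_ne_zero {q : Quaternion ℝ} (hq : q ≠ 0) : nu q ≠ 0 := by
  intro h
  have h0 : Complex.normSq (cxA q) - Complex.normSq (cxB q) = 0 := by have := congrArg (fun v : EuclideanSpace ℝ (Fin 3) => v 0) h; exact this
  have h1 : (2 * Complex.I * cxA q * cxB q).re = 0 := by have := congrArg (fun v : EuclideanSpace ℝ (Fin 3) => v 1) h; exact this
  have h2 : (2 * Complex.I * cxA q * cxB q).im = 0 := by have := congrArg (fun v : EuclideanSpace ℝ (Fin 3) => v 2) h; exact this
  have hprod : cxA q * cxB q = 0 := by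
    have h2I : (2 * Complex.I : ℂ) ≠ 0 := by simp [Complex.ext_iff]
    have hz : 2 * Complex.I * (cxA q * cxB q) = 0 := by
      rw [← mul_assoc]; exact Complex.ext h1 h2
    exact (mul_eq_zero.mp hz).resolve_left h2I
  have hab : cxA q = 0 ∧ cxB q = 0 := by
    rcases mul_eq_zero.mp hprod with h | h
    · refine ⟨h, ?_⟩
      have : Complex.normSq (cxB q) = 0 := by
        rw [h, map_zero, zero_sub, neg_eq_zero] at h0; exact h0
      exact Complex.normSq_eq_zero.mp this
    · refine ⟨?_, h⟩
      have : Complex.normSq (cxA q) = 0 := by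
        rw [h, map_zero, sub_zero] at h0; exact h0
      exact Complex.normSq_eq_zero.mp this
  apply hq
  have hA := hab.1; have hB := hab.2
  rw [cxA, Complex.ext_iff] at hA
  rw [cxB, Complex.ext_iff] at hB
  ext <;> simp_all [Quaternion.re_zero, Quaternion.imI_zero, Quaternion.imJ_zero, Quaternion.imK_zero]

lemma exists_nu_first (t : ℝ) (ht : t ≠ 0) :
    ∃ q : Quaternion ℝ, q ≠ 0 ∧ nu q = (WithLp.equiv 2 (Fin 3 → ℝ)).symm ![t, 0, 0] := by
  rcases ht.lt_or_gt with h | h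
  · have hpos : 0 < Real.sqrt (-t) := Real.sqrt_pos.mpr (by linarith)
    refine ⟨⟨0, 0, Real.sqrt (-t), 0⟩, ?_, ?_⟩
    · intro hq
      have : Real.sqrt (-t) = 0 := congrArg QuaternionAlgebra.imJ hq
      exact hpos.ne' this
    · ext i
      fin_cases i <;>
        simp [nu, nu_apply, cxA, cxB, Complex.normSq, Real.mul_self_sqrt (by linarith : (0:ℝ) ≤ -t)]
  · have hpos : 0 < Real.sqrt t := Real.sqrt_pos.mpr h
    refine ⟨⟨Real.sqrt t, 0, 0, 0⟩, ?_, ?_⟩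
    · intro hq
      have : Real.sqrt t = 0 := congrArg QuaternionAlgebra.re hq
      exact hpos.ne' this
    · ext i
      fin_cases i <;>
        simp [nu, nu_apply, cxA, cxB, Complex.normSq, Real.mul_self_sqrt h.le]

/-- For `w ∈ ℝ^k`, the combination `Σ w_m·ν(q_m)` is nonvanishing on the whole locus
`{q₁ ≠ 0} ⊂ ℍ^k` if and only if `w₁ ≠ 0` and `w₂ = … = w_k = 0`. -/
theorem stmt8 (k : ℕ) (hk : 0 < k) (w : Fin k → ℝ) :
    (∀ q : Fin k → Quaternion ℝ, q ⟨0, hk⟩ ≠ 0 →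
        ∑ m : Fin k, w m • nu (q m) ≠ 0) ↔
      (w ⟨0, hk⟩ ≠ 0 ∧ ∀ m : Fin k, m ≠ ⟨0, hk⟩ → w m = 0) := by
  set i0 : Fin k := ⟨0, hk⟩ with hi0
  constructor
  · intro H
    have hw0 : w i0 ≠ 0 := by
      intro hw
      apply H (Pi.single i0 1) (by simp) ?_
      apply Finset.sum_eq_zero
      intro j _
      by_cases hj : j = i0
      · simp [hj, hw]
      · simp [Pi.single_eq_of_ne hj, nu_zero]
    refine ⟨hw0, fun m hm => ?_⟩
    by_contra hwm
    set t : ℝ := -(w m) / (w i0) with htdef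
    have ht : t ≠ 0 := by
      simp only [htdef, div_ne_zero_iff, neg_ne_zero]
      exact ⟨hwm, hw0⟩
    obtain ⟨q1, hq1ne, hq1⟩ := exists_nu_first t ht
    set q : Fin k → Quaternion ℝ := fun j => if j = i0 then q1 else if j = m then 1 else 0 with hqdef
    apply H q (by simp [hqdef, hq1ne])
    have e1 : q i0 = q1 := by simp [hqdef]
    have e2 : q m = 1 := by simp [hqdef, hm]
    have hsum : ∑ j : Fin k, w j • nu (q j) = w i0 • nu q1 + w m • nu 1 := by
      have hpair : ∑ j ∈ ({i0, m} : Finset (Fin k)), w j • nu (q j) =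
          w i0 • nu (q i0) + w m • nu (q m) := Finset.sum_pair (Ne.symm hm)
      rw [← e1, ← e2, ← hpair]
      refine (Finset.sum_subset (Finset.subset_univ _) ?_).symm
      intro j _ hj
      simp only [Finset.mem_insert, Finset.mem_singleton, not_or] at hj
      simp [hqdef, hj.1, hj.2, nu_zero]
    rw [hsum, hq1, nu_one]
    ext i
    fin_cases i <;>
      simp [PiLp.add_apply, PiLp.smul_apply, htdef] <;>
      field_simp <;> ring
  · rintro ⟨hw0, hrest⟩ q hq
    have hsum : ∑ j : Fin k, w j • nu (q j) = w i0 • nu (q i0) := by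
      apply Finset.sum_eq_single
      · intro j _ hj
        simp [hrest j hj]
      · intro h
        exact absurd (Finset.mem_univ i0) h
    rw [hsum]
    exact smul_ne_zero hw0 (nu_ne_zero hq)
end
end

section
/- Let E be a finite-dimensional real inner product space and let U, V ⊆ E be subspaces with dim U = dim V. Then the bilinear pairing U × V → ℝ, (u, v) ↦ ⟨u, v⟩, is non-degenerate if and only if the bilinear pairing U^⊥ × V^⊥ → ℝ, (u, v) ↦ ⟨u, v⟩, between the orthogonal complements is non-degenerate. -/
lemma aux13 {E : Type*} [NormedAddCommGroup E] [InnerProductSpace ℝ E]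
    (A B : Submodule ℝ E) :
    (∀ a ∈ A, a ≠ 0 → ∃ b ∈ B, (inner ℝ a b : ℝ) ≠ 0) ↔ A ⊓ Bᗮ = ⊥ := by
  rw [Submodule.eq_bot_iff]
  constructor
  · rintro H x ⟨hxA, hxB⟩
    by_contra hne
    obtain ⟨b, hb, hne'⟩ := H x hxA hne
    exact hne' ((Submodule.mem_orthogonal' B x).mp hxB b hb)
  · intro H a haA hane
    by_contra hc
    push_neg at hc
    exact hane (H a ⟨haA, (Submodule.mem_orthogonal' B a).mpr hc⟩)

/-- For subspaces `U, V` of the same dimension in a finite-dimensional real inner product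
space, the pairing `(u, v) ↦ ⟨u, v⟩` on `U × V` is non-degenerate iff the corresponding
pairing on `U^⊥ × V^⊥` is non-degenerate. -/
theorem stmt13 (E : Type*) [NormedAddCommGroup E] [InnerProductSpace ℝ E]
    [FiniteDimensional ℝ E] (U V : Submodule ℝ E)
    (h : Module.finrank ℝ U = Module.finrank ℝ V) :
    ((∀ u ∈ U, u ≠ 0 → ∃ v ∈ V, (inner ℝ u v : ℝ) ≠ 0) ∧
        (∀ v ∈ V, v ≠ 0 → ∃ u ∈ U, (inner ℝ u v : ℝ) ≠ 0)) ↔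
      ((∀ u ∈ Uᗮ, u ≠ 0 → ∃ v ∈ Vᗮ, (inner ℝ u v : ℝ) ≠ 0) ∧
        (∀ v ∈ Vᗮ, v ≠ 0 → ∃ u ∈ Uᗮ, (inner ℝ u v : ℝ) ≠ 0)) := by
  have comm2 : ∀ (A B : Submodule ℝ E),
      (∀ v ∈ B, v ≠ 0 → ∃ u ∈ A, (inner ℝ u v : ℝ) ≠ 0) ↔
      (∀ v ∈ B, v ≠ 0 → ∃ u ∈ A, (inner ℝ v u : ℝ) ≠ 0) := by
    intro A B
    simp_rw [real_inner_comm]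
  rw [aux13 U V, comm2 U V, aux13 V U, aux13 Uᗮ Vᗮ, comm2 Uᗮ Vᗮ, aux13 Vᗮ Uᗮ,
    Submodule.orthogonal_orthogonal U, Submodule.orthogonal_orthogonal V]
  rw [inf_comm Uᗮ V, inf_comm Vᗮ U]
  tauto
end
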